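/- Let p be a positive integer and let A, B be disjoint finite sets with ground set X = A ∪ B. Define I ⊆ 2^X by: S ∈ I if and only if |S ∩ A| + p·|S ∩ B| ≤ |A| or p·|S ∩ A| + |S ∩ B| ≤ |B|. Then (X, I) is a downward-closed independence system and it is p-extendible. -/

import Mathlib

/-!
Both constraints are knapsack constraints whose item weights lie between `1` and `p`.
If `|T \ S| ≤ p`, removing all of `T \ S` from `T` leaves `S`, and `S ∪ {e}` is independent
by assumption. Otherwise remove any `p` elements of `T \ S`: they weigh at least `p`, and `e`
weighs at most `p`, so `(T \ Z) ∪ {e}` is no heavier than `T` in either constraint.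
-/

open Finset

/-- A downward-closed independence system on the finite type `α`. -/
def DownClosed {α : Type*} (I : Finset α → Prop) : Prop :=
  I ∅ ∧ ∀ A B : Finset α, I A → B ⊆ A → I B

/-- `(X, I)` is `p`-extendible: whenever `S ⊆ T`, `S, T ∈ I`, `e ∉ T` and `S ∪ {e} ∈ I`,
there is `Z ⊆ T \ S` with `|Z| ≤ p` and `(T \ Z) ∪ {e} ∈ I`. -/
def Extendible {α : Type*} [DecidableEq α] (p : ℕ) (I : Finset α → Prop) : Prop :=
  ∀ S T : Finset α, ∀ e : α, S ⊆ T → I S → I T → e ∉ T → I (insert e S) →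
    ∃ Z ⊆ T \ S, Z.card ≤ p ∧ I (insert e (T \ Z))

section Knapsack

variable {α ι : Type*}

lemma sum_ite_mem_eq_of_subset_union [DecidableEq α] {A B S : Finset α} (hdisj : Disjoint A B)
    (hS : S ⊆ A ∪ B) (a b : ℕ) :
    ∑ x ∈ S, (if x ∈ A then a else b) = a * #(S ∩ A) + b * #(S ∩ B) := by
  have hB : {x ∈ S | x ∉ A} = S ∩ B := by
    ext x
    have := @hS x
    have := @disjoint_left.1 hdisj x
    grind
  rw [sum_ite, sum_const, sum_const, filter_mem_eq_inter, hB, smul_eq_mul, smul_eq_mul,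
    mul_comm a, mul_comm b]

lemma sum_insert_sdiff_le_of_card_eq [DecidableEq α] {c : α → ℕ} {p : ℕ} {T Z : Finset α}
    {e : α} (hc : ∀ x, 1 ≤ c x) (hce : c e ≤ p) (hZT : Z ⊆ T) (hZ : #Z = p) (he : e ∉ T) :
    ∑ x ∈ insert e (T \ Z), c x ≤ ∑ x ∈ T, c x := by
  have hpZ : p ≤ ∑ x ∈ Z, c x := by
    simpa [hZ] using card_nsmul_le_sum Z c 1 fun x _ => hc x
  rw [sum_insert fun h => he (mem_sdiff.1 h).1, ← sum_sdiff hZT]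
  omega

theorem downClosed_exists_sum_le [Nonempty ι] (c : ι → α → ℕ) (K : ι → ℕ) :
    DownClosed fun S => ∃ i, ∑ x ∈ S, c i x ≤ K i :=
  ⟨⟨Classical.arbitrary ι, by simp⟩,
    fun _ _ ⟨i, hA⟩ hBA => ⟨i, (sum_le_sum_of_subset hBA).trans hA⟩⟩

theorem extendible_exists_sum_le [DecidableEq α] {p : ℕ} {c : ι → α → ℕ} (K : ι → ℕ)
    (hc : ∀ i x, 1 ≤ c i x ∧ c i x ≤ p) :
    Extendible p fun S => ∃ i, ∑ x ∈ S, c i x ≤ K i := by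
  intro S T e hST _ ⟨i, hT⟩ he heS
  by_cases hsmall : #(T \ S) ≤ p
  · exact ⟨T \ S, subset_rfl, hsmall, by rwa [Finset.sdiff_sdiff_eq_self hST]⟩
  · obtain ⟨Z, hZ, hZcard⟩ := exists_subset_card_eq (le_of_not_ge hsmall)
    have hZT : Z ⊆ T := hZ.trans sdiff_subset
    exact ⟨Z, hZ, hZcard.le, i,
      (sum_insert_sdiff_le_of_card_eq (fun x => (hc i x).1) (hc i e).2 hZT hZcard he).trans hT⟩

end Knapsack

/-- For disjoint `A, B` covering the ground set, the family
`I = {S : |S ∩ A| + p·|S ∩ B| ≤ |A| or p·|S ∩ A| + |S ∩ B| ≤ |B|}` is a downward-closed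
independence system and is `p`-extendible. -/
theorem two_constraint_system_is_pExtendible
    {α : Type*} [Fintype α] [DecidableEq α] (p : ℕ) (hp : 0 < p)
    (A B : Finset α) (hdisj : Disjoint A B)
    (hground : (Finset.univ : Finset α) = A ∪ B)
    (I : Finset α → Prop)
    (hI : ∀ S : Finset α, I S ↔
      ((S ∩ A).card + p * (S ∩ B).card ≤ A.card ∨
       p * (S ∩ A).card + (S ∩ B).card ≤ B.card)) :
    DownClosed I ∧ Extendible p I := by
  set c : Fin 2 → α → ℕ := ![fun x => if x ∈ A then 1 else p, fun x => if x ∈ A then p else 1]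
  have hIc : I = fun S => ∃ i, ∑ x ∈ S, c i x ≤ ![#A, #B] i := by
    funext S
    have hS : S ⊆ A ∪ B := hground ▸ subset_univ S
    simp [hI, Fin.exists_fin_two, c, sum_ite_mem_eq_of_subset_union hdisj hS]
  have hc : ∀ i x, 1 ≤ c i x ∧ c i x ≤ p := by
    intro i x
    fin_cases i <;> simp [c] <;> split_ifs <;> omega
  subst hIc
  exact ⟨downClosed_exists_sum_le c _, extendible_exists_sum_le _ hc⟩
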